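/- arXiv:1109.5556 — 2 statements merged into one kernel-verified Lean document; each statement's English description precedes it below -/
import Mathlib

section
/- For all m ∈ ℤ and all n, n' ∈ ℕ one has 0 ≤ v^{m,0}_{n,n'} + v^{m,1}_{n,n'} ≤ v^{0,0}_{n,n'} + v^{0,1}_{n,n'}. -/
open Real

/-- Pochhammer symbol `(x)_a = Γ(x+a)/Γ(x)` for real arguments. -/
noncomputable def poch (x a : ℝ) : ℝ := Real.Gamma (x + a) / Real.Gamma x

/-- Coulomb matrix elements `v^{m,0}_{n,n'}`. -/
noncomputable def v0 (m : ℤ) (n n' : ℕ) : ℝ :=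
  (1 / (Real.pi * Real.sqrt (poch ((n : ℝ) + 1) ((|m| : ℤ) : ℝ) *
      poch ((n' : ℝ) + 1) ((|m| : ℤ) : ℝ)))) *
    ∑ k ∈ Finset.range (min n n' + 1),
      poch ((k : ℝ) + 1) (((|m| : ℤ) : ℝ) - 1/2) /
        (poch ((n : ℝ) - (k : ℝ) + 1/2) (1/2) * poch ((n' : ℝ) - (k : ℝ) + 1/2) (1/2))

/-- Coulomb matrix elements `v^{m,1}_{n,n'}`. -/
noncomputable def v1 (m : ℤ) (n n' : ℕ) : ℝ :=
  if 0 ≤ m then v0 (m + 1) n n' else v0 (m + 1) (n + 1) (n' + 1)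

/-- The quadratic form `E_m[a]` at coupling `Z`. -/
noncomputable def Eform (Z : ℝ) (m : ℤ) (a : ℕ → ℝ) : ℝ :=
  (∑' n : ℕ, 2 * Real.sqrt ((n : ℝ) + ((max m 0 : ℤ) : ℝ) + 1) * a n ^ 2)
    - (Z / 2) * ∑' n : ℕ, ∑' n' : ℕ, a n * (v0 m n n' + v1 m n n') * a n'

/-- The critical coupling constant `Z_c`. -/
noncomputable def Zc : ℝ :=
  (Real.Gamma (1/4) ^ 4 / (8 * Real.pi ^ 2) + 8 * Real.pi ^ 2 / Real.Gamma (1/4) ^ 4)⁻¹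

/-!
Replace `|m|` in `v0 m` by a real parameter `a`. Raising `a` by one multiplies the `k`-th summand
by `k + a + 1/2` and the prefactor by `((n + 1 + a) (n' + 1 + a))^{-1/2}`, so `v0 m` decreases
with `|m|`; this settles `m ≥ 0`. For `m < 0`, `v1 m` is `v0` at `|m| - 1` but at the shifted
indices `(n + 1, n' + 1)`, so one more inequality is needed: `v0 0 (n + 1) (n' + 1) ≤ v0 0 n n'`.
With `c j = Γ(j + 1/2) / Γ(j + 1)` one has `π v0 0 n n' = ∑ₖ c k c (n - k) c (n' - k)`, and the
step follows from the convolution identity `∑_{i + j = n} c i c j / (i + 1) = 2 √π c (n + 1)`.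
-/

open Finset

theorem poch_pos {x a : ℝ} (hx : 0 < x) (hxa : 0 < x + a) : 0 < poch x a :=
  div_pos (Real.Gamma_pos_of_pos hxa) (Real.Gamma_pos_of_pos hx)

theorem poch_add_one {x a : ℝ} (h : x + a ≠ 0) : poch x (a + 1) = poch x a * (x + a) := by
  rw [poch, poch, ← add_assoc, Real.Gamma_add_one h]
  ring

theorem poch_zero {x : ℝ} (hx : 0 < x) : poch x 0 = 1 := by
  rw [poch, add_zero, div_self (Real.Gamma_pos_of_pos hx).ne']

noncomputable def gammaHalfRatio (j : ℕ) : ℝ := Real.Gamma (j + 1/2) / Real.Gamma (j + 1)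

theorem gammaHalfRatio_pos (j : ℕ) : 0 < gammaHalfRatio j :=
  div_pos (Real.Gamma_pos_of_pos (by positivity)) (Real.Gamma_pos_of_pos (by positivity))

theorem gammaHalfRatio_zero : gammaHalfRatio 0 = √π := by
  rw [gammaHalfRatio, Nat.cast_zero, zero_add, zero_add, Real.Gamma_one_half_eq, Real.Gamma_one,
    div_one]

theorem gammaHalfRatio_succ (j : ℕ) :
    gammaHalfRatio (j + 1) = gammaHalfRatio j * ((j + 1/2) / (j + 1)) := by
  rw [gammaHalfRatio, gammaHalfRatio, Nat.cast_succ, add_right_comm,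
    Real.Gamma_add_one (by positivity), Real.Gamma_add_one (by positivity)]
  field_simp

theorem gammaHalfRatio_succ_eq_sub (j : ℕ) :
    gammaHalfRatio (j + 1) = gammaHalfRatio j - gammaHalfRatio j / (2 * (j + 1)) := by
  rw [gammaHalfRatio_succ]
  field_simp
  ring

theorem gammaHalfRatio_antitone : Antitone gammaHalfRatio := by
  refine antitone_nat_of_succ_le fun j => ?_
  rw [gammaHalfRatio_succ]
  refine mul_le_of_le_one_right (gammaHalfRatio_pos j).le ?_
  rw [div_le_one (by positivity)]
  linarith

theorem poch_half_half (j : ℕ) : poch (j + 1/2) (1/2) = (gammaHalfRatio j)⁻¹ := by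
  rw [poch, gammaHalfRatio, inv_div, add_assoc]
  norm_num

theorem sum_antidiagonal_gammaHalfRatio_div_succ (n : ℕ) :
    ((n : ℝ) + 2) * ∑ p ∈ antidiagonal (n + 1),
        gammaHalfRatio p.1 * gammaHalfRatio p.2 / (p.1 + 1)
      = ((n : ℝ) + 1) * ∑ p ∈ antidiagonal n, gammaHalfRatio p.1 * gammaHalfRatio p.2 / (p.1 + 1)
        + √π * gammaHalfRatio (n + 1) := by
  set c := gammaHalfRatio
  have hsplit : ((n : ℝ) + 2) * ∑ p ∈ antidiagonal (n + 1), c p.1 * c p.2 / (p.1 + 1)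
      = ∑ p ∈ antidiagonal (n + 1), c p.1 * c p.2
        + ∑ p ∈ antidiagonal (n + 1), p.2 * c p.1 * c p.2 / (p.1 + 1) := by
    rw [mul_sum, ← sum_add_distrib]
    refine sum_congr rfl fun p hp => ?_
    have hsum : (p.1 : ℝ) + p.2 = n + 1 := by exact_mod_cast mem_antidiagonal.mp hp
    field_simp
    linear_combination -(c p.1 * c p.2) * hsum
  have hrec : ∀ p ∈ antidiagonal n,
      c (p.1 + 1) * c p.2 + (p.2 + 1 : ℕ) * c p.1 * c (p.2 + 1) / (p.1 + 1)
        = ((n : ℝ) + 1) * (c p.1 * c p.2 / (p.1 + 1)) := by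
    intro p hp
    have hsum : (p.1 : ℝ) + p.2 = n := by exact_mod_cast mem_antidiagonal.mp hp
    simp only [c, gammaHalfRatio_succ]
    push_cast
    field_simp
    linear_combination 2 * gammaHalfRatio p.1 * gammaHalfRatio p.2 * hsum
  rw [hsplit, Nat.sum_antidiagonal_succ, Nat.sum_antidiagonal_succ', mul_sum, ← sum_congr rfl hrec,
    sum_add_distrib]
  dsimp only
  rw [show c 0 = √π from gammaHalfRatio_zero]
  push_cast
  ring

/-- The coefficient identity behind
`(1 - x)^{-1/2} · 2 (1 - (1 - x)^{1/2}) = 2 ((1 - x)^{-1/2} - 1)`,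
since `gammaHalfRatio j / √π` is the `j`-th coefficient of `(1 - x)^{-1/2}`. -/
theorem sum_antidiagonal_gammaHalfRatio_div (n : ℕ) :
    ∑ p ∈ antidiagonal n, gammaHalfRatio p.1 * gammaHalfRatio p.2 / (p.1 + 1)
      = 2 * √π * gammaHalfRatio (n + 1) := by
  induction n with
  | zero =>
    simp only [Nat.antidiagonal_zero, sum_singleton, gammaHalfRatio_succ, gammaHalfRatio_zero]
    push_cast
    ring_nf
  | succ n ih =>
    have hrec := sum_antidiagonal_gammaHalfRatio_div_succ n
    rw [ih, gammaHalfRatio_succ (n + 1)] at *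
    have : ((n : ℝ) + 2) ≠ 0 := by positivity
    push_cast
    field_simp at hrec ⊢
    linear_combination hrec

noncomputable def tripleSum (n n' : ℕ) : ℝ :=
  ∑ k ∈ range (min n n' + 1), gammaHalfRatio k * gammaHalfRatio (n - k) * gammaHalfRatio (n' - k)

theorem tripleSum_comm (n n' : ℕ) : tripleSum n n' = tripleSum n' n := by
  simp only [tripleSum, min_comm n, mul_right_comm _ (gammaHalfRatio (n - _))]

/-- Peeling off `k = 0` and using `c (k + 1) = c k - c k / (2 (k + 1))` for `c = gammaHalfRatio`,
the loss `½ ∑ c k c (n - k) c (n' - k) / (k + 1)` outweighs the new term `√π c (n + 1) c (n' + 1)`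
by `sum_antidiagonal_gammaHalfRatio_div` and `c (n' - k) ≥ c (n' + 1)`. -/
theorem tripleSum_succ_le_of_le {n n' : ℕ} (h : n ≤ n') :
    tripleSum (n + 1) (n' + 1) ≤ tripleSum n n' := by
  set c := gammaHalfRatio
  have hpeel : tripleSum (n + 1) (n' + 1)
      = √π * c (n + 1) * c (n' + 1) + ∑ k ∈ range (n + 1), c (k + 1) * c (n - k) * c (n' - k) := by
    rw [tripleSum, min_eq_left (by omega), sum_range_succ']
    simp only [Nat.add_sub_add_right, Nat.sub_zero, c, gammaHalfRatio_zero]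
    ring
  have hterm : ∀ k ∈ range (n + 1), c (k + 1) * c (n - k) * c (n' - k)
      ≤ c k * c (n - k) * c (n' - k) - c (n' + 1) / 2 * (c k * c (n - k) / (k + 1)) := by
    intro k hk
    have hmono : c (n' + 1) ≤ c (n' - k) := gammaHalfRatio_antitone (by omega)
    have hpos : 0 ≤ c k * c (n - k) / (k + 1) :=
      div_nonneg (mul_pos (gammaHalfRatio_pos k) (gammaHalfRatio_pos _)).le (by positivity)
    have hsplit : c (k + 1) * c (n - k) * c (n' - k)
        = c k * c (n - k) * c (n' - k) - c (n' - k) / 2 * (c k * c (n - k) / (k + 1)) := by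
      rw [show c (k + 1) = _ from gammaHalfRatio_succ_eq_sub k]
      field_simp
      ring
    linarith [mul_le_mul_of_nonneg_right hmono hpos]
  have hconv : ∑ k ∈ range (n + 1), c k * c (n - k) / (k + 1) = 2 * √π * c (n + 1) := by
    rw [← Nat.sum_antidiagonal_eq_sum_range_succ (fun i j => c i * c j / (i + 1))]
    exact sum_antidiagonal_gammaHalfRatio_div n
  calc tripleSum (n + 1) (n' + 1)
      ≤ √π * c (n + 1) * c (n' + 1) + ∑ k ∈ range (n + 1),
          (c k * c (n - k) * c (n' - k) - c (n' + 1) / 2 * (c k * c (n - k) / (k + 1))) := by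
        rw [hpeel]
        gcongr with k hk
        exact hterm k hk
    _ = tripleSum n n' := by
        rw [sum_sub_distrib, ← mul_sum, hconv, tripleSum, min_eq_left h]
        ring

theorem tripleSum_succ_le (n n' : ℕ) : tripleSum (n + 1) (n' + 1) ≤ tripleSum n n' := by
  rcases le_total n n' with h | h
  · exact tripleSum_succ_le_of_le h
  · rw [tripleSum_comm, tripleSum_comm n]
    exact tripleSum_succ_le_of_le h

noncomputable def coulombSummand (a : ℝ) (n n' k : ℕ) : ℝ :=
  poch (k + 1) (a - 1/2) / (poch (n - k + 1/2) (1/2) * poch (n' - k + 1/2) (1/2))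

noncomputable def coulombV (a : ℝ) (n n' : ℕ) : ℝ :=
  1 / (π * √(poch (n + 1) a * poch (n' + 1) a)) *
    ∑ k ∈ range (min n n' + 1), coulombSummand a n n' k

theorem v0_eq_coulombV (m : ℤ) (n n' : ℕ) : v0 m n n' = coulombV m.natAbs n n' := by
  rw [Nat.cast_natAbs]
  rfl

theorem coulombSummand_pos {a : ℝ} (ha : -1/2 < a) {n n' k : ℕ} (hk : k ≤ min n n') :
    0 < coulombSummand a n n' k := by
  have hkn : (k : ℝ) ≤ n := by exact_mod_cast hk.trans (min_le_left _ _)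
  have hkn' : (k : ℝ) ≤ n' := by exact_mod_cast hk.trans (min_le_right _ _)
  unfold coulombSummand
  refine div_pos (poch_pos (by positivity) (by linarith)) (mul_pos ?_ ?_) <;>
    exact poch_pos (by linarith) (by linarith)

theorem coulombV_pos {a : ℝ} (ha : -1/2 < a) (n n' : ℕ) : 0 < coulombV a n n' := by
  have hpoch : ∀ j : ℕ, 0 < poch (j + 1) a := fun j => poch_pos (by positivity) (by linarith)
  refine mul_pos (by have := hpoch n; have := hpoch n'; positivity) (sum_pos (fun k hk => ?_) ?_)
  · exact coulombSummand_pos ha (Nat.lt_succ_iff.mp (mem_range.mp hk))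
  · exact nonempty_range_add_one

theorem coulombSummand_add_one {a : ℝ} (ha : -1/2 < a) (n n' k : ℕ) :
    coulombSummand (a + 1) n n' k = coulombSummand a n n' k * (k + a + 1/2) := by
  have hpos : (0 : ℝ) < k + 1 + (a - 1/2) := by linarith [k.cast_nonneg (α := ℝ)]
  rw [coulombSummand, coulombSummand, add_sub_right_comm, poch_add_one hpos.ne']
  ring

theorem coulombV_add_one_le {a : ℝ} (ha : -1/2 < a) (n n' : ℕ) :
    coulombV (a + 1) n n' ≤ coulombV a n n' := by
  have hn : (0 : ℝ) < n + 1 + a := by linarith [n.cast_nonneg (α := ℝ)]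
  have hn' : (0 : ℝ) < n' + 1 + a := by linarith [n'.cast_nonneg (α := ℝ)]
  set P := poch (n + 1) a * poch (n' + 1) a
  set R := √((n + 1 + a) * (n' + 1 + a))
  have hP : 0 ≤ P := (mul_pos (poch_pos (by positivity) hn) (poch_pos (by positivity) hn')).le
  have hR : 0 < R := sqrt_pos.2 (mul_pos hn hn')
  have hprefactor : √(poch (n + 1) (a + 1) * poch (n' + 1) (a + 1)) = √P * R := by
    rw [poch_add_one hn.ne', poch_add_one hn'.ne', ← sqrt_mul hP, add_assoc (n : ℝ),
      add_assoc (n' : ℝ), mul_mul_mul_comm]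
  have hbound : ∀ k ∈ range (min n n' + 1), (k : ℝ) + a + 1/2 ≤ R := by
    intro k hk
    have hk : k ≤ min n n' := Nat.lt_succ_iff.mp (mem_range.mp hk)
    have hkn : (k : ℝ) ≤ n := by exact_mod_cast hk.trans (min_le_left _ _)
    have hkn' : (k : ℝ) ≤ n' := by exact_mod_cast hk.trans (min_le_right _ _)
    rw [le_sqrt (by linarith [k.cast_nonneg (α := ℝ)]) (by positivity)]
    nlinarith
  unfold coulombV
  simp_rw [coulombSummand_add_one ha, hprefactor]
  calc 1 / (π * (√P * R)) * ∑ k ∈ range (min n n' + 1), coulombSummand a n n' k * (k + a + 1/2)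
      ≤ 1 / (π * (√P * R)) * ∑ k ∈ range (min n n' + 1), coulombSummand a n n' k * R := by
        refine mul_le_mul_of_nonneg_left (sum_le_sum fun k hk => ?_) (by positivity)
        refine mul_le_mul_of_nonneg_left (hbound k hk) (coulombSummand_pos ha ?_).le
        exact Nat.lt_succ_iff.mp (mem_range.mp hk)
    _ = 1 / (π * √P) * ∑ k ∈ range (min n n' + 1), coulombSummand a n n' k := by
        rw [← sum_mul]
        field_simp

theorem coulombV_natCast_antitone (n n' : ℕ) : Antitone fun μ : ℕ => coulombV μ n n' :=
  antitone_nat_of_succ_le fun μ => by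
    simpa only [Nat.cast_succ] using coulombV_add_one_le (by linarith [μ.cast_nonneg (α := ℝ)]) n n'

theorem coulombSummand_zero {n n' k : ℕ} (hk : k ≤ min n n') :
    coulombSummand 0 n n' k
      = gammaHalfRatio k * gammaHalfRatio (n - k) * gammaHalfRatio (n' - k) := by
  have hpoch : poch (k + 1) (0 - 1/2) = gammaHalfRatio k := by
    rw [poch, gammaHalfRatio]
    ring_nf
  have hhalf : ∀ {N : ℕ}, k ≤ N → poch (N - k + 1/2) (1/2) = (gammaHalfRatio (N - k))⁻¹ := by
    intro N hN
    rw [← poch_half_half, Nat.cast_sub hN]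
  rw [coulombSummand, hpoch, hhalf (hk.trans (min_le_left _ _)),
    hhalf (hk.trans (min_le_right _ _))]
  field_simp

theorem coulombV_zero (n n' : ℕ) : coulombV 0 n n' = tripleSum n n' / π := by
  rw [coulombV, poch_zero (by positivity), poch_zero (by positivity), mul_one, sqrt_one, mul_one,
    tripleSum, one_div_mul_eq_div]
  exact congrArg (· / π)
    (sum_congr rfl fun k hk => coulombSummand_zero (Nat.lt_succ_iff.mp (mem_range.mp hk)))

theorem v0_pos (m : ℤ) (n n' : ℕ) : 0 < v0 m n n' := by
  rw [v0_eq_coulombV]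
  exact coulombV_pos (by linarith [m.natAbs.cast_nonneg (α := ℝ)]) n n'

theorem v1_pos (m : ℤ) (n n' : ℕ) : 0 < v1 m n n' := by
  unfold v1
  split_ifs <;> exact v0_pos _ _ _

theorem v0_le_v0_of_natAbs_le {m m' : ℤ} (h : m'.natAbs ≤ m.natAbs) (n n' : ℕ) :
    v0 m n n' ≤ v0 m' n n' := by
  rw [v0_eq_coulombV, v0_eq_coulombV]
  exact coulombV_natCast_antitone n n' h

theorem v0_zero_succ_le (n n' : ℕ) : v0 0 (n + 1) (n' + 1) ≤ v0 0 n n' := by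
  simp only [v0_eq_coulombV, Int.natAbs_zero, Nat.cast_zero, coulombV_zero]
  exact div_le_div_of_nonneg_right (tripleSum_succ_le n n') pi_pos.le

theorem potential_matrix_elements_bounds (m : ℤ) (n n' : ℕ) :
    0 ≤ v0 m n n' + v1 m n n' ∧
    v0 m n n' + v1 m n n' ≤ v0 0 n n' + v1 0 n n' := by
  refine ⟨(add_pos (v0_pos m n n') (v1_pos m n n')).le, ?_⟩
  have hv1_zero : v1 0 n n' = v0 1 n n' := by simp [v1]
  rw [hv1_zero, v1]
  split_ifs with hm
  · exact add_le_add (v0_le_v0_of_natAbs_le (by simp) n n')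
      (v0_le_v0_of_natAbs_le (by omega) n n')
  · rw [add_comm (v0 0 n n')]
    exact add_le_add (v0_le_v0_of_natAbs_le (by omega) n n')
      ((v0_le_v0_of_natAbs_le (by simp) (n + 1) (n' + 1)).trans (v0_zero_succ_le n n'))
end

section
/- For every finitely supported sequence a : ℕ → ℝ one has Σ_{n,n'} a_n v^{0,0}_{n,n'} a_{n'} ≤ (Γ(1/4)⁴/(2π²)) · Σ_{n=0}^∞ √(n+1) a_n². -/
open Real

/-!
Write `c_s(n) = (s)ₙ / n!` for the Taylor coefficients of `(1 - x)^(-s)`; then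
`v^{0,0}_{n,n'} = √π ∑_{k ≤ min(n,n')} c_{1/2}(k) c_{1/2}(n-k) c_{1/2}(n'-k)`, a symmetric
nonnegative kernel, and we apply the Schur test with the weights `w_n = c_{1/4}(n)`.
Writing `c_{1/4}(k+j)` as a Beta integral and bounding the partial sums of `∑ⱼ c_{1/2}(j) tʲ` by
`(1 - t)^(-1/2)` gives `∑ⱼ c_{1/2}(j) c_{1/4}(k+j) ≤ Γ(k+1/4) / (Γ(3/4) Γ(k+1/2))`, and the
Chu–Vandermonde identity `c_{1/4} * c_{1/2} = c_{3/4}` turns this into the row bound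
`∑_{n'} v_{n,n'} w_{n'} ≤ (Γ(1/4)/Γ(3/4)) c_{3/4}(n)`. The Schur multiplier
`(Γ(1/4)/Γ(3/4))² Γ(n+3/4)/Γ(n+1/4)` is at most `Γ(1/4)⁴/(2π²) √(n+1)` by Gautschi's
inequality and the reflection formula `Γ(1/4) Γ(3/4) = π√2`.
-/

open Finset

/-- `c_s(n) = (s)ₙ / n!`, the `n`-th Taylor coefficient of `(1 - x) ^ (-s)` at `0`. -/
noncomputable def risingCoeff (s : ℝ) (n : ℕ) : ℝ := Gamma (n + s) / (Gamma s * n.factorial)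

section RisingCoeff

variable {s : ℝ}

lemma risingCoeff_pos (hs : 0 < s) (n : ℕ) : 0 < risingCoeff s n := by
  unfold risingCoeff
  have := Gamma_pos_of_pos hs
  have := Gamma_pos_of_pos (show 0 < (n : ℝ) + s by positivity)
  positivity

lemma risingCoeff_zero (hs : 0 < s) : risingCoeff s 0 = 1 := by
  simp [risingCoeff, (Gamma_pos_of_pos hs).ne']

lemma risingCoeff_succ (hs : 0 < s) (n : ℕ) :
    (n + 1) * risingCoeff s (n + 1) = (n + s) * risingCoeff s n := by
  have hΓ : Gamma (n + 1 + s) = (n + s) * Gamma (n + s) := by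
    rw [← Gamma_add_one (by positivity)]; ring_nf
  have := (Gamma_pos_of_pos hs).ne'
  simp only [risingCoeff, Nat.factorial_succ, Nat.cast_mul, Nat.cast_succ, hΓ]
  field_simp

lemma risingCoeff_mul_Gamma_div_Gamma {a b : ℝ} (ha : 0 < a) (hb : 0 < b) (k : ℕ) :
    risingCoeff b k * (Gamma (k + a) / Gamma (k + b)) = Gamma a / Gamma b * risingCoeff a k := by
  have := (Gamma_pos_of_pos ha).ne'
  have := (Gamma_pos_of_pos hb).ne'
  have := (Gamma_pos_of_pos (show 0 < (k : ℝ) + b by positivity)).ne'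
  simp only [risingCoeff]
  field_simp

/-- Chu–Vandermonde: `(1 - x)^(-a) (1 - x)^(-b) = (1 - x)^(-(a + b))`, coefficientwise. -/
theorem sum_antidiagonal_risingCoeff_mul_risingCoeff {a b : ℝ} (ha : 0 < a) (hb : 0 < b)
    (n : ℕ) :
    ∑ p ∈ antidiagonal n, risingCoeff a p.1 * risingCoeff b p.2 = risingCoeff (a + b) n := by
  induction n with
  | zero => simp [risingCoeff_zero, ha, hb, add_pos ha hb]
  | succ n ih =>
    have hsplit : ((n : ℝ) + 1) * ∑ p ∈ antidiagonal (n + 1), risingCoeff a p.1 * risingCoeff b p.2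
        = ∑ p ∈ antidiagonal (n + 1), (p.1 : ℝ) * risingCoeff a p.1 * risingCoeff b p.2
          + ∑ p ∈ antidiagonal (n + 1), risingCoeff a p.1 * ((p.2 : ℝ) * risingCoeff b p.2) := by
      rw [mul_sum, ← sum_add_distrib]
      refine sum_congr rfl fun p hp => ?_
      have : (p.1 : ℝ) + p.2 = n + 1 := by exact_mod_cast mem_antidiagonal.1 hp
      rw [← this]; ring
    have hfirst : ∑ p ∈ antidiagonal (n + 1), (p.1 : ℝ) * risingCoeff a p.1 * risingCoeff b p.2
        = ∑ p ∈ antidiagonal n, (p.1 + a) * risingCoeff a p.1 * risingCoeff b p.2 := by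
      rw [Nat.sum_antidiagonal_succ]
      simp only [Nat.cast_zero, zero_mul, zero_add, Nat.cast_succ, risingCoeff_succ ha]
    have hsecond : ∑ p ∈ antidiagonal (n + 1), risingCoeff a p.1 * ((p.2 : ℝ) * risingCoeff b p.2)
        = ∑ p ∈ antidiagonal n, risingCoeff a p.1 * ((p.2 + b) * risingCoeff b p.2) := by
      rw [Nat.sum_antidiagonal_succ']
      simp only [Nat.cast_zero, zero_mul, mul_zero, zero_add, Nat.cast_succ, risingCoeff_succ hb]
    have hrec : ((n : ℝ) + 1) * ∑ p ∈ antidiagonal (n + 1), risingCoeff a p.1 * risingCoeff b p.2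
        = (n + (a + b)) * risingCoeff (a + b) n := by
      rw [hsplit, hfirst, hsecond, ← sum_add_distrib, ← ih, mul_sum]
      refine sum_congr rfl fun p hp => ?_
      have : (p.1 : ℝ) + p.2 = n := by exact_mod_cast mem_antidiagonal.1 hp
      rw [← this]; ring
    rw [← risingCoeff_succ (add_pos ha hb)] at hrec
    exact mul_left_cancel₀ (by positivity) hrec

-- Truncating the solution `(1 - x)^(-s)` of `(1 - x) P' = s P` breaks it only in the top degree.
lemma one_sub_mul_sum_deriv_sub_mul_sum_risingCoeff (hs : 0 < s) (M : ℕ) (x : ℝ) :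
    (1 - x) * ∑ j ∈ range (M + 1), risingCoeff s j * (j * x ^ (j - 1))
      - s * ∑ j ∈ range (M + 1), risingCoeff s j * x ^ j
      = -((M + s) * risingCoeff s M * x ^ M) := by
  induction M with
  | zero => simp [risingCoeff_zero hs]
  | succ M ih =>
    rw [sum_range_succ, sum_range_succ _ (M + 1), Nat.add_sub_cancel, pow_succ]
    have hrec := risingCoeff_succ hs M
    push_cast
    linear_combination ih + x ^ M * hrec

theorem sum_risingCoeff_mul_pow_mul_one_sub_rpow_le_one (hs : 0 < s) (J : ℕ) {x : ℝ}
    (hx₀ : 0 ≤ x) (hx₁ : x < 1) :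
    (∑ j ∈ range J, risingCoeff s j * x ^ j) * (1 - x) ^ s ≤ 1 := by
  rcases J with _ | M
  · simp
  set P : ℝ → ℝ := fun y => ∑ j ∈ range (M + 1), risingCoeff s j * y ^ j
  set P' : ℝ → ℝ := fun y => ∑ j ∈ range (M + 1), risingCoeff s j * (j * y ^ (j - 1))
  have hP : ∀ y, HasDerivAt P (P' y) y := fun y =>
    HasDerivAt.fun_sum fun j _ => (hasDerivAt_pow j y).const_mul _
  have hderiv : ∀ y ∈ interior (Set.Ico (0 : ℝ) 1), HasDerivWithinAt (fun y => P y * (1 - y) ^ s)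
      (P' y * (1 - y) ^ s + P y * (-1 * s * (1 - y) ^ (s - 1))) (interior (Set.Ico 0 1)) y := by
    intro y hy
    rw [interior_Ico] at hy
    exact ((hP y).mul (((hasDerivAt_id y).const_sub 1).rpow_const
      (Or.inl (sub_ne_zero.2 hy.2.ne')))).hasDerivWithinAt
  have hderiv_nonpos : ∀ y ∈ interior (Set.Ico (0 : ℝ) 1),
      P' y * (1 - y) ^ s + P y * (-1 * s * (1 - y) ^ (s - 1)) ≤ 0 := by
    intro y hy
    rw [interior_Ico] at hy
    have h1y : 0 < 1 - y := sub_pos.2 hy.2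
    have hpow : (1 - y) ^ s = (1 - y) * (1 - y) ^ (s - 1) := by
      rw [rpow_sub_one h1y.ne']; field_simp
    have hid := one_sub_mul_sum_deriv_sub_mul_sum_risingCoeff hs M y
    have : 0 ≤ (M + s) * risingCoeff s M * y ^ M :=
      mul_nonneg (mul_nonneg (by positivity) (risingCoeff_pos hs M).le) (pow_nonneg hy.1.le M)
    calc P' y * (1 - y) ^ s + P y * (-1 * s * (1 - y) ^ (s - 1))
        = (1 - y) ^ (s - 1) * ((1 - y) * P' y - s * P y) := by rw [hpow]; ring
      _ ≤ 0 := by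
        rw [hid]
        exact mul_nonpos_of_nonneg_of_nonpos (rpow_nonneg h1y.le _) (neg_nonpos.2 this)
  have hcont : ContinuousOn (fun y => P y * (1 - y) ^ s) (Set.Ico 0 1) :=
    (continuous_finsetSum _ fun j _ => continuous_const.mul (continuous_pow j)).continuousOn.mul
      ((continuous_const.sub continuous_id).rpow_const fun _ => Or.inr hs.le).continuousOn
  have hanti := antitoneOn_of_hasDerivWithinAt_nonpos (convex_Ico 0 1) hcont hderiv
    hderiv_nonpos
  calc P x * (1 - x) ^ s ≤ P 0 * (1 - 0) ^ s :=
        hanti ⟨le_rfl, zero_lt_one⟩ ⟨hx₀, hx₁⟩ hx₀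
    _ = 1 := by simp [P, sum_range_succ', risingCoeff_zero hs]

end RisingCoeff

section BetaIntegral

open MeasureTheory intervalIntegral

theorem integral_rpow_mul_one_sub_rpow {p q : ℝ} (hp : 0 < p) (hq : 0 < q) :
    ∫ t in (0 : ℝ)..1, t ^ (p - 1) * (1 - t) ^ (q - 1) = Gamma p * Gamma q / Gamma (p + q) := by
  have hβ := Complex.betaIntegral_eq_Gamma_mul_div p q (by simpa) (by simpa)
  rw [Complex.betaIntegral, ← Complex.ofReal_add, Complex.Gamma_ofReal, Complex.Gamma_ofReal,
    Complex.Gamma_ofReal, ← Complex.ofReal_mul, ← Complex.ofReal_div] at hβ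
  refine Complex.ofReal_injective (.trans ?_ hβ)
  rw [← intervalIntegral.integral_ofReal]
  refine integral_congr fun t ht => ?_
  rw [Set.uIcc_of_le zero_le_one] at ht
  simp only [Complex.ofReal_mul, Complex.ofReal_cpow ht.1,
    Complex.ofReal_cpow (sub_nonneg.2 ht.2)]
  push_cast
  ring_nf

lemma intervalIntegrable_rpow_mul_one_sub_rpow {p q : ℝ} (hp : 0 < p) (hq : 0 < q) :
    IntervalIntegrable (fun t => t ^ (p - 1) * (1 - t) ^ (q - 1)) volume 0 1 := by
  refine intervalIntegrable_of_integral_ne_zero ?_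
  rw [integral_rpow_mul_one_sub_rpow hp hq]
  have := Gamma_pos_of_pos hp
  have := Gamma_pos_of_pos hq
  have := Gamma_pos_of_pos (add_pos hp hq)
  positivity

variable {a : ℝ}

lemma risingCoeff_eq_integral (ha₀ : 0 < a) (ha₁ : a < 1) (m : ℕ) :
    risingCoeff a m = (Gamma a * Gamma (1 - a))⁻¹ *
      ∫ t in (0 : ℝ)..1, t ^ ((m + a) - 1) * (1 - t) ^ ((1 - a) - 1) := by
  rw [integral_rpow_mul_one_sub_rpow (by positivity) (sub_pos.2 ha₁),
    show (m : ℝ) + a + (1 - a) = m + 1 by ring, Gamma_nat_eq_factorial, risingCoeff]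
  have := (Gamma_pos_of_pos (sub_pos.2 ha₁)).ne'
  field_simp

-- The right side is the value of the whole (Gauss hypergeometric) series, by Gauss's theorem.
theorem sum_risingCoeff_mul_risingCoeff_add_le {b : ℝ} (ha : 0 < a) (hb : 0 < b) (hab : a + b < 1)
    (k J : ℕ) :
    ∑ j ∈ range J, risingCoeff b j * risingCoeff a (k + j)
      ≤ (Gamma a * Gamma (1 - a))⁻¹ * (Gamma (k + a) * Gamma (1 - a - b) / Gamma (k + 1 - b)) := by
  have ha₁ : a < 1 := by linarith
  set f : ℝ → ℝ := fun t => t ^ ((k + a) - 1) * (1 - t) ^ ((1 - a) - 1)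
  have hf : IntervalIntegrable f volume 0 1 :=
    intervalIntegrable_rpow_mul_one_sub_rpow (by positivity) (sub_pos.2 ha₁)
  have hpow : ∀ j : ℕ, IntervalIntegrable (fun t => risingCoeff b j * (t ^ j * f t)) volume 0 1 :=
    fun j => (hf.continuousOn_mul (continuous_pow j).continuousOn).const_mul _
  have hterm : ∀ j : ℕ, risingCoeff a (k + j)
      = (Gamma a * Gamma (1 - a))⁻¹ * ∫ t in (0 : ℝ)..1, t ^ j * f t := by
    intro j
    rw [risingCoeff_eq_integral ha ha₁]
    congr 1
    refine integral_congr_ae (Filter.Eventually.of_forall fun t ht => ?_)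
    rw [Set.uIoc_of_le zero_le_one] at ht
    simp only [f, ← mul_assoc, ← rpow_natCast, ← rpow_add ht.1]
    push_cast; ring_nf
  have hsum : ∑ j ∈ range J, risingCoeff b j * risingCoeff a (k + j)
      = (Gamma a * Gamma (1 - a))⁻¹ *
        ∫ t in (0 : ℝ)..1, (∑ j ∈ range J, risingCoeff b j * t ^ j) * f t := by
    simp only [sum_mul, mul_assoc]
    rw [integral_finsetSum fun j _ => hpow j, mul_sum]
    refine sum_congr rfl fun j _ => ?_
    rw [hterm, intervalIntegral.integral_const_mul]
    ring
  have hle : ∀ t ∈ Set.Ioo (0 : ℝ) 1, (∑ j ∈ range J, risingCoeff b j * t ^ j) * f t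
      ≤ t ^ ((k + a) - 1) * (1 - t) ^ ((1 - a - b) - 1) := by
    intro t ⟨ht₀, ht₁⟩
    have h1t : 0 < 1 - t := sub_pos.2 ht₁
    have hP := sum_risingCoeff_mul_pow_mul_one_sub_rpow_le_one hb J ht₀.le ht₁
    rw [← le_div_iff₀ (rpow_pos_of_pos h1t b)] at hP
    calc (∑ j ∈ range J, risingCoeff b j * t ^ j) * f t ≤ 1 / (1 - t) ^ b * f t :=
          mul_le_mul_of_nonneg_right hP (by positivity)
      _ = t ^ ((k + a) - 1) * (1 - t) ^ ((1 - a - b) - 1) := by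
          rw [show (1 - a - b) - 1 = -b + ((1 - a) - 1) by ring, rpow_add h1t, rpow_neg h1t.le]
          simp only [f]; ring
  rw [hsum]
  gcongr
  refine (integral_mono_on_of_le_Ioo zero_le_one ?_ ?_ hle).trans_eq ?_
  · exact hf.continuousOn_mul (continuous_finsetSum _ fun j _ =>
      continuous_const.mul (continuous_pow j)).continuousOn
  · exact intervalIntegrable_rpow_mul_one_sub_rpow (by positivity) (by linarith)
  · rw [integral_rpow_mul_one_sub_rpow (by positivity) (by linarith)]
    ring_nf

end BetaIntegral

lemma two_mul_mul_le_mul_sq_add_sq_div {r : ℝ} (hr : 0 < r) (x y : ℝ) :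
    2 * x * y ≤ r * x ^ 2 + y ^ 2 / r := by
  have hsq : 0 ≤ (r * x - y) ^ 2 / r := by positivity
  have : (r * x - y) ^ 2 / r = r * x ^ 2 + y ^ 2 / r - 2 * x * y := by field_simp; ring
  linarith

theorem sum_sum_mul_le_of_schur_test {ι : Type*} (s : Finset ι) {K : ι → ι → ℝ} {w μ : ι → ℝ}
    (hK : ∀ i ∈ s, ∀ j ∈ s, 0 ≤ K i j) (hK_symm : ∀ i ∈ s, ∀ j ∈ s, K i j = K j i)
    (hw : ∀ i ∈ s, 0 < w i) (hrow : ∀ i ∈ s, ∑ j ∈ s, K i j * w j ≤ μ i * w i) (a : ι → ℝ) :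
    ∑ i ∈ s, ∑ j ∈ s, a i * K i j * a j ≤ ∑ i ∈ s, μ i * a i ^ 2 := by
  set X : ι → ι → ℝ := fun i j => K i j * w j * (a i ^ 2 / w i)
  have hamgm : ∀ i ∈ s, ∀ j ∈ s, a i * K i j * a j ≤ (X i j + X j i) / 2 := by
    intro i hi j hj
    have hwi := hw i hi
    have hwj := hw j hj
    have h := mul_le_mul_of_nonneg_left
      (two_mul_mul_le_mul_sq_add_sq_div (div_pos hwj hwi) (a i) (a j)) (hK i hi j hj)
    simp only [X, hK_symm j hj i hi]
    field_simp at h ⊢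
    linarith
  calc ∑ i ∈ s, ∑ j ∈ s, a i * K i j * a j
      ≤ ∑ i ∈ s, ∑ j ∈ s, (X i j + X j i) / 2 :=
        sum_le_sum fun i hi => sum_le_sum fun j hj => hamgm i hi j hj
    _ = ∑ i ∈ s, (a i ^ 2 / w i) * ∑ j ∈ s, K i j * w j := by
        simp only [← sum_div, sum_add_distrib]
        rw [sum_comm (f := fun i j => X j i), add_self_div_two]
        simp only [X, mul_sum]
        exact sum_congr rfl fun i _ => sum_congr rfl fun j _ => by ring
    _ ≤ ∑ i ∈ s, (a i ^ 2 / w i) * (μ i * w i) :=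
        sum_le_sum fun i hi =>
          mul_le_mul_of_nonneg_left (hrow i hi) (div_nonneg (sq_nonneg _) (hw i hi).le)
    _ = ∑ i ∈ s, μ i * a i ^ 2 := sum_congr rfl fun i hi => by
        have := (hw i hi).ne'
        field_simp

/-- Gautschi's inequality, from the log-convexity of `Γ`. -/
lemma Gamma_add_half_le_sqrt_mul_Gamma {x : ℝ} (hx : 0 < x) : Gamma (x + 1 / 2) ≤ √x * Gamma x := by
  have h := Gamma_mul_add_mul_le_rpow_Gamma_mul_rpow_Gamma hx (by positivity : 0 < x + 1)
    (by norm_num : (0 : ℝ) < 1 / 2) (by norm_num : (0 : ℝ) < 1 / 2) (by norm_num)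
  have hΓ := (Gamma_pos_of_pos hx).le
  rw [show 1 / 2 * x + 1 / 2 * (x + 1) = x + 1 / 2 by ring, Gamma_add_one hx.ne',
    mul_rpow hx.le hΓ, ← sqrt_eq_rpow, ← sqrt_eq_rpow] at h
  calc Gamma (x + 1 / 2) ≤ √(Gamma x) * (√x * √(Gamma x)) := h
    _ = √x * Gamma x := by rw [mul_left_comm, mul_self_sqrt hΓ]

lemma Gamma_one_quarter_mul_Gamma_three_quarters : Gamma (1 / 4) * Gamma (3 / 4) = π * √2 := by
  have h := Gamma_mul_Gamma_one_sub (1 / 4)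
  rw [show (1 : ℝ) - 1 / 4 = 3 / 4 by norm_num, show π * (1 / 4) = π / 4 by ring,
    sin_pi_div_four] at h
  have := (sqrt_pos.2 (show (0 : ℝ) < 2 by norm_num)).ne'
  rw [h]
  field_simp
  rw [sq_sqrt zero_le_two]

section Coulomb

variable {s t : ℝ}

lemma poch_natCast_add_one (hs : 0 < s) (hts : t + 1 = s) (n : ℕ) :
    poch (n + 1) t = Gamma s * risingCoeff s n := by
  have := (Gamma_pos_of_pos hs).ne'
  rw [poch, risingCoeff, Gamma_nat_eq_factorial, show (n : ℝ) + 1 + t = n + s by linarith]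
  field_simp

lemma poch_natCast_add (hs : 0 < s) (hst : s + t = 1) (n : ℕ) :
    poch (n + s) t = (Gamma s * risingCoeff s n)⁻¹ := by
  have := (Gamma_pos_of_pos hs).ne'
  rw [poch, risingCoeff, show (n : ℝ) + s + t = n + 1 by linarith, Gamma_nat_eq_factorial]
  field_simp

lemma v0_zero_eq (n n' : ℕ) :
    v0 0 n n' = √π * ∑ k ∈ range (min n n' + 1),
      risingCoeff (1 / 2) k * risingCoeff (1 / 2) (n - k) * risingCoeff (1 / 2) (n' - k) := by
  have hpoch_zero : ∀ m : ℕ, poch (m + 1) 0 = 1 := fun m => by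
    simp [poch, (Gamma_pos_of_pos (by positivity : (0 : ℝ) < m + 1)).ne']
  have hhalf : ∀ m : ℕ, poch (m + 1 / 2) (1 / 2) = (√π * risingCoeff (1 / 2) m)⁻¹ := fun m => by
    rw [poch_natCast_add (by norm_num) (by norm_num), Gamma_one_half_eq]
  have := (sqrt_pos.2 pi_pos).ne'
  simp only [v0, abs_zero, Int.cast_zero, hpoch_zero, mul_one, sqrt_one, mul_sum]
  refine sum_congr rfl fun k hk => ?_
  have hkn : k ≤ n := by grind
  have hkn' : k ≤ n' := by grind
  rw [poch_natCast_add_one (s := 1 / 2) (by norm_num) (by norm_num), Gamma_one_half_eq,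
    ← Nat.cast_sub hkn, ← Nat.cast_sub hkn', hhalf, hhalf]
  field_simp
  rw [sq_sqrt pi_pos.le]

lemma v0_zero_nonneg (n n' : ℕ) : 0 ≤ v0 0 n n' := by
  have hc := fun m => (risingCoeff_pos (s := 1 / 2) (by norm_num) m).le
  rw [v0_zero_eq]
  exact mul_nonneg (sqrt_nonneg _)
    (sum_nonneg fun k _ => mul_nonneg (mul_nonneg (hc _) (hc _)) (hc _))

lemma v0_zero_comm (n n' : ℕ) : v0 0 n n' = v0 0 n' n := by
  simp only [v0_zero_eq, min_comm n, mul_right_comm _ (risingCoeff _ (n - _))]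

theorem sum_v0_zero_mul_risingCoeff_le (n M : ℕ) :
    ∑ n' ∈ range M, v0 0 n n' * risingCoeff (1 / 4) n'
      ≤ Gamma (1 / 4) / Gamma (3 / 4) * risingCoeff (3 / 4) n := by
  set c := risingCoeff (1 / 2)
  set w := risingCoeff (1 / 4)
  have hc : ∀ m, 0 < c m := risingCoeff_pos (by norm_num)
  have hswap : ∑ n' ∈ range M, v0 0 n n' * w n'
      = √π * ∑ k ∈ range (n + 1), c k * c (n - k) * ∑ j ∈ range (M - k), c j * w (k + j) := by
    simp only [v0_zero_eq, mul_assoc, ← mul_sum, sum_mul]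
    congr 1
    refine (sum_comm' (β := ℝ) (t' := range (n + 1)) (s' := fun k => Ico k M) ?_).trans
      (sum_congr rfl fun k _ => ?_)
    · intro n' k; simp only [mem_range, mem_Ico]; omega
    simp only [sum_Ico_eq_sum_range, Nat.add_sub_cancel_left, mul_sum]
    rfl
  have hinner : ∀ k, ∑ j ∈ range (M - k), c j * w (k + j)
      ≤ (Gamma (3 / 4))⁻¹ * (Gamma (k + 1 / 4) / Gamma (k + 1 / 2)) := fun k => by
    refine (sum_risingCoeff_mul_risingCoeff_add_le (by norm_num) (by norm_num) (by norm_num) k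
      (M - k)).trans_eq ?_
    rw [show (1 : ℝ) - 1 / 4 = 3 / 4 by norm_num, show (3 : ℝ) / 4 - 1 / 2 = 1 / 4 by norm_num,
      show (k : ℝ) + 1 - 1 / 2 = k + 1 / 2 by ring]
    have := (Gamma_pos_of_pos (show (0 : ℝ) < 1 / 4 by norm_num)).ne'
    field_simp
  calc ∑ n' ∈ range M, v0 0 n n' * w n'
      ≤ √π * ∑ k ∈ range (n + 1),
          c k * c (n - k) * ((Gamma (3 / 4))⁻¹ * (Gamma (k + 1 / 4) / Gamma (k + 1 / 2))) := by
        rw [hswap]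
        gcongr with k
        · exact mul_nonneg (hc _).le (hc _).le
        · exact hinner k
    _ = Gamma (1 / 4) / Gamma (3 / 4) * ∑ k ∈ range (n + 1), w k * c (n - k) := by
        rw [mul_sum, mul_sum]
        refine sum_congr rfl fun k _ => ?_
        have hck : c k * (Gamma (k + 1 / 4) / Gamma (k + 1 / 2)) = Gamma (1 / 4) / √π * w k := by
          rw [← Gamma_one_half_eq]
          exact risingCoeff_mul_Gamma_div_Gamma (by norm_num) (by norm_num) k
        have := (sqrt_pos.2 pi_pos).ne'
        calc √π * (c k * c (n - k) * ((Gamma (3 / 4))⁻¹ * (Gamma (k + 1 / 4) / Gamma (k + 1 / 2))))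
            = √π * c (n - k) * (Gamma (3 / 4))⁻¹
              * (c k * (Gamma (k + 1 / 4) / Gamma (k + 1 / 2))) := by ring
          _ = Gamma (1 / 4) / Gamma (3 / 4) * (w k * c (n - k)) := by rw [hck]; field_simp
    _ = Gamma (1 / 4) / Gamma (3 / 4) * risingCoeff (3 / 4) n := by
        rw [← Nat.sum_antidiagonal_eq_sum_range_succ_mk (fun p => w p.1 * c p.2),
          sum_antidiagonal_risingCoeff_mul_risingCoeff (by norm_num) (by norm_num)]
        norm_num

lemma Gamma_div_Gamma_mul_risingCoeff_div_risingCoeff_le (n : ℕ) :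
    Gamma (1 / 4) / Gamma (3 / 4) * risingCoeff (3 / 4) n / risingCoeff (1 / 4) n
      ≤ Gamma (1 / 4) ^ 4 / (2 * π ^ 2) * √(n + 1) := by
  have h14 := Gamma_pos_of_pos (show (0 : ℝ) < 1 / 4 by norm_num)
  have h34 := Gamma_pos_of_pos (show (0 : ℝ) < 3 / 4 by norm_num)
  have hn14 := Gamma_pos_of_pos (show (0 : ℝ) < n + 1 / 4 by positivity)
  have hconst : Gamma (1 / 4) ^ 4 / (2 * π ^ 2) = (Gamma (1 / 4) / Gamma (3 / 4)) ^ 2 := by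
    have h := congrArg (· ^ 2) Gamma_one_quarter_mul_Gamma_three_quarters
    simp only [mul_pow, sq_sqrt zero_le_two] at h
    field_simp
    linear_combination h
  have hgautschi : Gamma (n + 3 / 4) ≤ √(n + 1) * Gamma (n + 1 / 4) := by
    calc Gamma (n + 3 / 4) = Gamma ((n + 1 / 4) + 1 / 2) := by ring_nf
      _ ≤ √(n + 1 / 4) * Gamma (n + 1 / 4) := Gamma_add_half_le_sqrt_mul_Gamma (by positivity)
      _ ≤ √(n + 1) * Gamma (n + 1 / 4) := by gcongr; norm_num
  calc Gamma (1 / 4) / Gamma (3 / 4) * risingCoeff (3 / 4) n / risingCoeff (1 / 4) n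
      = (Gamma (1 / 4) / Gamma (3 / 4)) ^ 2 * (Gamma (n + 3 / 4) / Gamma (n + 1 / 4)) := by
        simp only [risingCoeff]
        field_simp
    _ ≤ Gamma (1 / 4) ^ 4 / (2 * π ^ 2) * √(n + 1) := by
        rw [hconst]
        gcongr
        rwa [div_le_iff₀ hn14]

end Coulomb

theorem v00_quadratic_form_sqrt_bound (a : ℕ → ℝ) (ha : (Function.support a).Finite) :
    (∑' n : ℕ, ∑' n' : ℕ, a n * v0 0 n n' * a n') ≤
      Real.Gamma (1/4) ^ 4 / (2 * Real.pi ^ 2) *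
        ∑' n : ℕ, Real.sqrt ((n : ℝ) + 1) * a n ^ 2 := by
  obtain ⟨N, hN⟩ := ha.bddAbove
  have hsupp : ∀ n ∉ range (N + 1), a n = 0 := fun n hn =>
    Function.notMem_support.1 fun h => hn (mem_range.2 (Nat.lt_succ_of_le (hN h)))
  rw [tsum_congr fun n => tsum_eq_sum (s := range (N + 1)) fun n' hn' => by simp [hsupp n' hn'],
    tsum_eq_sum fun n hn => by simp [hsupp n hn], tsum_eq_sum fun n hn => by simp [hsupp n hn],
    mul_sum]
  have hw : ∀ n, 0 < risingCoeff (1 / 4) n := risingCoeff_pos (by norm_num)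
  calc ∑ n ∈ range (N + 1), ∑ n' ∈ range (N + 1), a n * v0 0 n n' * a n'
      ≤ ∑ n ∈ range (N + 1),
          Gamma (1 / 4) / Gamma (3 / 4) * risingCoeff (3 / 4) n / risingCoeff (1 / 4) n * a n ^ 2 :=
        sum_sum_mul_le_of_schur_test _ (fun n _ n' _ => v0_zero_nonneg n n')
          (fun n _ n' _ => v0_zero_comm n n') (fun n _ => hw n)
          (fun n _ => (sum_v0_zero_mul_risingCoeff_le n (N + 1)).trans_eq
            (div_mul_cancel₀ _ (hw n).ne').symm) a
    _ ≤ ∑ n ∈ range (N + 1), Gamma (1 / 4) ^ 4 / (2 * π ^ 2) * (√(n + 1) * a n ^ 2) :=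
        sum_le_sum fun n _ => by
          rw [← mul_assoc]
          exact mul_le_mul_of_nonneg_right
            (Gamma_div_Gamma_mul_risingCoeff_div_risingCoeff_le n) (sq_nonneg _)
end
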